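/- The facet of the Voronoi cell of the A_4 root lattice orthogonal to the highest root ω_1 + ω_4 is a rhombohedron: the three generating edge vectors ω_1 − ω_2, ω_2 − ω_3, ω_3 − ω_4 all have length 2/√5, and the angle between any two of them is arccos(−1/4). -/

import Mathlib

/-!
Consecutive differences of fundamental weights are `ω_k - ω_{k+1} = c - e_k`, where
`c = (1/5, …, 1/5)` is the centroid of the standard simplex spanned by the unit vectors `e_k`.
The edges of the facet are therefore vectors from the centroid of a regular simplex to its vertices,
whose Gram matrix is `δ_ab - 1/n` (here `n = 5`): they have squared length `1 - 1/n = 4/5` and pairwise cosine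
`-(1/n) / (1 - 1/n) = -1/(n - 1) = -1/4`.
-/

/-- Fundamental weight `ω_i` of `A_4` in `ℝ^5`:
`ω_i` has first `i` coordinates `(5-i)/5` and remaining coordinates `-i/5`. -/
noncomputable def omegaA4 (i : ℕ) : EuclideanSpace ℝ (Fin 5) :=
  WithLp.toLp 2 (fun j : Fin 5 => if (j : ℕ) < i then (5 - (i : ℝ)) / 5 else -(i : ℝ) / 5)

open InnerProductGeometry EuclideanSpace

section StandardSimplex

variable {ι : Type*} [Fintype ι] [DecidableEq ι]

noncomputable def simplexCentroid (ι : Type*) [Fintype ι] : EuclideanSpace ℝ ι :=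
  WithLp.toLp 2 fun _ => (Fintype.card ι : ℝ)⁻¹

theorem inner_simplexCentroid_sub_single (a b : ι) :
    inner ℝ (simplexCentroid ι - single a 1) (simplexCentroid ι - single b 1)
      = (if a = b then 1 else 0) - (Fintype.card ι : ℝ)⁻¹ := by
  have hcard : (Fintype.card ι : ℝ) ≠ 0 := by
    have : Nonempty ι := ⟨a⟩
    positivity
  have hcc : inner ℝ (simplexCentroid ι) (simplexCentroid ι) = (Fintype.card ι : ℝ)⁻¹ := by
    simp only [simplexCentroid, PiLp.inner_apply, RCLike.inner_apply, conj_trivial,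
      Finset.sum_const, Finset.card_univ, nsmul_eq_mul]
    field_simp
  simp only [inner_sub_left, inner_sub_right, hcc, inner_single_left, inner_single_right]
  simp [simplexCentroid, eq_comm]

theorem norm_simplexCentroid_sub_single (a : ι) :
    ‖simplexCentroid ι - single a 1‖ = √(1 - (Fintype.card ι : ℝ)⁻¹) := by
  rw [norm_eq_sqrt_real_inner, inner_simplexCentroid_sub_single, if_pos rfl]

theorem angle_simplexCentroid_sub_single {a b : ι} (hab : a ≠ b) :
    angle (simplexCentroid ι - single a 1) (simplexCentroid ι - single b 1)
      = Real.arccos (-((Fintype.card ι : ℝ) - 1)⁻¹) := by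
  have hn : (1 : ℝ) < Fintype.card ι := by
    exact_mod_cast Fintype.one_lt_card_iff.mpr ⟨a, b, hab⟩
  rw [angle, inner_simplexCentroid_sub_single, if_neg hab, zero_sub,
    norm_simplexCentroid_sub_single, norm_simplexCentroid_sub_single,
    Real.mul_self_sqrt (sub_nonneg.mpr (inv_le_one_of_one_le₀ hn.le))]
  congr 1
  have : (Fintype.card ι : ℝ) - 1 ≠ 0 := by linarith
  field_simp

end StandardSimplex

theorem omegaA4_sub_omegaA4_add_one {k : ℕ} (hk : k < 5) :
    omegaA4 k - omegaA4 (k + 1) = simplexCentroid (Fin 5) - single ⟨k, hk⟩ 1 := by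
  ext j
  simp only [omegaA4, Order.lt_add_one_iff, Nat.cast_add, Nat.cast_one, neg_add_rev,
    PiLp.sub_apply, simplexCentroid, Fintype.card_fin, Nat.cast_ofNat, PiLp.single_apply,
    Fin.ext_iff]
  split_ifs <;> first | omega | ring

/-- The facet of the Voronoi cell of the `A_4` root lattice is a rhombohedron:
its generating edges `ω_1 - ω_2, ω_2 - ω_3, ω_3 - ω_4` all have length `2/√5`
and the angle between any two of them is `arccos(-1/4)`. -/
theorem rhombohedron_facetA4 :
    (∀ i : Fin 3, ‖omegaA4 ((i : ℕ) + 1) - omegaA4 ((i : ℕ) + 2)‖ = 2 / Real.sqrt 5) ∧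
    (∀ i j : Fin 3, i ≠ j →
      InnerProductGeometry.angle (omegaA4 ((i : ℕ) + 1) - omegaA4 ((i : ℕ) + 2))
          (omegaA4 ((j : ℕ) + 1) - omegaA4 ((j : ℕ) + 2))
        = Real.arccos (-(1 / 4))) := by
  have edge (i : Fin 3) : omegaA4 (i + 1) - omegaA4 (i + 2)
      = simplexCentroid (Fin 5) - single i.succ.castSucc 1 :=
    omegaA4_sub_omegaA4_add_one (by omega)
  refine ⟨fun i => ?_, fun i j hij => ?_⟩
  · rw [edge, norm_simplexCentroid_sub_single, Fintype.card_fin,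
      show (1 : ℝ) - ((5 : ℕ) : ℝ)⁻¹ = (2 / √5) ^ 2 by norm_num [div_pow]]
    exact Real.sqrt_sq (by positivity)
  · rw [edge, edge, angle_simplexCentroid_sub_single (by simpa using hij), Fintype.card_fin]
    norm_num
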